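/- In K_1^X there is an index e such that e^n · 0 = n for every n ∈ ω, where e^n denotes n-fold application e·e·…·e (associated to the left) and e^0 = I. Consequently, any embedding F of K_1^X into another pca is determined on ω by the pair (F(e), F(0)). -/

import Mathlib

/-- A partial applicative structure: a set with a partial binary application. -/
structure PAS where
  carrier : Type
  app : carrier → carrier → Part carrier

namespace PAS

/-- Closed terms over a partial applicative structure. -/
inductive Term (A : PAS) : Type
  | const : A.carrier → Term A
  | app : Term A → Term A → Term A

/-- Evaluation of a closed term (a partial element of the carrier). -/
def Term.eval {A : PAS} : Term A → Part A.carrier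
  | .const a => Part.some a
  | .app s t => do
      let x ← Term.eval s
      let y ← Term.eval t
      A.app x y

/-- Kleene equality of closed terms: both undefined, or both defined and equal. -/
def KEq {A : PAS} (s t : Term A) : Prop := s.eval = t.eval

/-- The transfinite hierarchy of extensionality relations `∼_α` on closed terms:
`s ∼_0 t` iff `s ≃ t`; `s ∼_{α+1} t` iff `∀ x, s·x ∼_α t·x`; and at limits,
`s ∼_α t` iff `s ∼_β t` for some `β < α`. -/
noncomputable def sim (A : PAS) (α : Ordinal) : Term A → Term A → Prop :=
  Ordinal.limitRecOn α
    (fun s t => KEq s t)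
    (fun _ ih s t => ∀ x : A.carrier, ih (s.app (.const x)) (t.app (.const x)))
    (fun β _ ih s t => ∃ γ, ∃ h : γ < β, ih γ h s t)

end PAS

/-- A partial combinatory algebra: a partial applicative structure with
combinators `K` and `S` such that `K·a·b = a`, `S·a·b` is defined, and
`S·a·b·c ≃ a·c·(b·c)`. -/
structure PCA extends PAS where
  K : carrier
  S : carrier
  K_spec : ∀ a b : carrier, (app K a).bind (fun x => app x b) = Part.some a
  S_defined : ∀ a b : carrier, ((app S a).bind (fun x => app x b)).Dom
  S_spec : ∀ a b c : carrier,
    ((app S a).bind (fun x => app x b)).bind (fun x => app x c)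
      = (app a c).bind (fun u => (app b c).bind (fun v => app u v))

/-- Codes for oracle Turing machines (partial recursive functions relative to an oracle). -/
inductive OCode : Type
  | zero | succ | left | right | oracle
  | pair (a b : OCode) | comp (a b : OCode) | prec (a b : OCode) | rfind' (a : OCode)

/-- Evaluation of an oracle code relative to the oracle O. -/
def evalo (O : ℕ →. ℕ) : OCode → ℕ →. ℕ
  | .zero => pure 0
  | .succ => fun n => Part.some (n + 1)
  | .left => fun n => Part.some n.unpair.1
  | .right => fun n => Part.some n.unpair.2
  | .oracle => O
  | .pair cf cg => fun n => Nat.pair <$> evalo O cf n <*> evalo O cg n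
  | .comp cf cg => fun n => evalo O cg n >>= evalo O cf
  | .prec cf cg => fun n =>
      n.unpair.2.rec (evalo O cf n.unpair.1) fun y IH => do
        let i ← IH
        evalo O cg (Nat.pair n.unpair.1 (Nat.pair y i))
  | .rfind' cf => fun n =>
      (Nat.rfind fun m =>
        (fun x => x = 0) <$> evalo O cf (Nat.pair n.unpair.1 (m + n.unpair.2))).map
        (· + n.unpair.2)

/-- A numbering of the oracle codes by natural numbers. -/
def ocodeOfNat : ℕ → OCode
  | 0 => .zero
  | 1 => .succ
  | 2 => .left
  | 3 => .right
  | 4 => .oracle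
  | (n + 5) =>
    match n.unpair.1 % 4 with
    | 0 => .pair (ocodeOfNat n.unpair.2.unpair.1) (ocodeOfNat n.unpair.2.unpair.2)
    | 1 => .comp (ocodeOfNat n.unpair.2.unpair.1) (ocodeOfNat n.unpair.2.unpair.2)
    | 2 => .prec (ocodeOfNat n.unpair.2.unpair.1) (ocodeOfNat n.unpair.2.unpair.2)
    | _ => .rfind' (ocodeOfNat n.unpair.2)
  decreasing_by
    all_goals
      have h1 : n.unpair.2 ≤ n := Nat.unpair_right_le n
      have h2 : n.unpair.2.unpair.1 ≤ n.unpair.2 := Nat.unpair_left_le _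
      have h3 : n.unpair.2.unpair.2 ≤ n.unpair.2 := Nat.unpair_right_le _
      omega

open Classical in
/-- The characteristic function of a set of naturals, as a partial function. -/
noncomputable def chi (X : Set ℕ) : ℕ →. ℕ :=
  fun n => Part.some (if n ∈ X then 1 else 0)

/-- The relativized Kleene model K₁^X: the pca on ω with application n·m = Φ_n^X(m). -/
noncomputable def K1X (X : Set ℕ) : PAS :=
  ⟨ℕ, fun n m => evalo (chi X) (ocodeOfNat n) m⟩

/-- Turing reducibility: X ≤_T Y iff the characteristic function of X is partial
computable relative to (an oracle for) Y. -/
noncomputable def TuringRed (X Y : Set ℕ) : Prop :=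
  ∃ c : OCode, ∀ n : ℕ, evalo (chi Y) c n = chi X n

/-- An embedding of partial applicative structures: an injection preserving defined
applications and preserving undefinedness. -/
def PAS.IsEmbedding (A B : PAS) (F : A.carrier → B.carrier) : Prop :=
  Function.Injective F ∧
    ∀ a b : A.carrier,
      (∀ c : A.carrier, A.app a b = Part.some c → B.app (F a) (F b) = Part.some (F c)) ∧
      (¬ (A.app a b).Dom → ¬ (B.app (F a) (F b)).Dom)

/-- The n-fold self-application e^n = e·e·…·e (left associated), with e^0 = i
(a designated identity element). -/
noncomputable def selfPow (X : Set ℕ) (e i : ℕ) : ℕ → Part ℕ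
  | 0 => Part.some i
  | n + 1 => (selfPow X e i n).bind fun a => (K1X X).app a e
namespace Stmt18

def natOfOCode : OCode → ℕ
  | .zero => 0
  | .succ => 1
  | .left => 2
  | .right => 3
  | .oracle => 4
  | .pair a b => Nat.pair 0 (Nat.pair (natOfOCode a) (natOfOCode b)) + 5
  | .comp a b => Nat.pair 1 (Nat.pair (natOfOCode a) (natOfOCode b)) + 5
  | .prec a b => Nat.pair 2 (Nat.pair (natOfOCode a) (natOfOCode b)) + 5
  | .rfind' a => Nat.pair 3 (natOfOCode a) + 5

lemma decode_encode (c : OCode) : ocodeOfNat (natOfOCode c) = c := by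
  induction c <;> simp [natOfOCode, ocodeOfNat, Nat.unpair_pair, *]

lemma bind_some_pfun (a : ℕ) (f : ℕ →. ℕ) : (Part.some a).bind f = f a := Part.bind_some a f


def cid : OCode := .pair .left .right

def constO : ℕ → OCode
  | 0 => .zero
  | n + 1 => .comp .succ (constO n)

def plus5 : OCode := .comp .succ (.comp .succ (.comp .succ (.comp .succ .succ)))

lemma eval_cid (O : ℕ →. ℕ) (x : ℕ) : evalo O cid x = Part.some x := by
  simp [cid, evalo, Seq.seq]

lemma eval_constO (O : ℕ →. ℕ) (k x : ℕ) : evalo O (constO k) x = Part.some k := by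
  induction k with
  | zero => simp [constO, evalo]; rfl
  | succ n ih => simp [constO, evalo, ih]

lemma eval_plus5 (O : ℕ →. ℕ) (x : ℕ) : evalo O plus5 x = Part.some (x + 5) := by
  simp [plus5, evalo]

lemma eval_prec_zero (O : ℕ →. ℕ) (cf cg : OCode) (a : ℕ) :
    evalo O (.prec cf cg) (Nat.pair a 0) = evalo O cf a := by
  simp [evalo, Nat.unpair_pair]

lemma eval_prec_succ (O : ℕ →. ℕ) (cf cg : OCode) (a k : ℕ) :
    evalo O (.prec cf cg) (Nat.pair a (k + 1))
      = (evalo O (.prec cf cg) (Nat.pair a k)).bind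
          (fun i => evalo O cg (Nat.pair a (Nat.pair k i))) := by
  simp [evalo, Nat.unpair_pair]


lemma eval_comp (O : ℕ →. ℕ) (cf cg : OCode) (x : ℕ) :
    evalo O (.comp cf cg) x = (evalo O cg x).bind (evalo O cf) := rfl

lemma eval_pair (O : ℕ →. ℕ) (cf cg : OCode) (x : ℕ) :
    evalo O (.pair cf cg) x
      = (evalo O cf x).bind fun a => (evalo O cg x).bind fun b => Part.some (Nat.pair a b) := by
  show (Nat.pair <$> evalo O cf x <*> evalo O cg x) = _
  simp only [Seq.seq, Part.map_eq_map, Part.bind_map]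
  congr 1; funext y; exact (Part.bind_some_eq_map _ _).symm

def cn : ℕ → ℕ
  | 0 => 0
  | k + 1 => Nat.pair 1 (Nat.pair 1 (cn k)) + 5

lemma cn_eq (k : ℕ) : cn k = natOfOCode (constO k) := by
  induction k with
  | zero => rfl
  | succ n ih => simp [cn, constO, natOfOCode, ih]

def cgCn : OCode := .comp plus5 (.pair (constO 1) (.pair (constO 1) (.comp .right .right)))

def Ccn : OCode := .comp (.prec .zero cgCn) (.pair cid cid)

lemma eval_precCn (O : ℕ →. ℕ) (a k : ℕ) :
    evalo O (.prec .zero cgCn) (Nat.pair a k) = Part.some (cn k) := by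
  induction k with
  | zero => rw [eval_prec_zero]; rfl
  | succ n ih =>
      rw [eval_prec_succ, ih, Part.bind_some, cgCn, eval_comp, eval_pair, eval_constO,
        Part.bind_some, eval_pair, eval_constO, Part.bind_some]
      simp [evalo, Nat.unpair_pair, eval_plus5, cn, bind_some_pfun]

lemma eval_Ccn (O : ℕ →. ℕ) (x : ℕ) : evalo O Ccn x = Part.some (cn x) := by
  simp only [Ccn, eval_comp, eval_pair, eval_cid, Part.bind_some, bind_some_pfun, eval_precCn]


lemma eval_left (O : ℕ →. ℕ) (x : ℕ) : evalo O .left x = Part.some x.unpair.1 := rfl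
lemma eval_right (O : ℕ →. ℕ) (x : ℕ) : evalo O .right x = Part.some x.unpair.2 := rfl
lemma eval_succ (O : ℕ →. ℕ) (x : ℕ) : evalo O .succ x = Part.some (x + 1) := rfl

def pidn : ℕ := natOfOCode (.pair cid cid)

def CG : OCode :=
  .comp plus5 (.pair (constO 1) (.pair .left (.comp Ccn (.pair .left (.comp .succ .right)))))

def P : OCode := .comp plus5 (.pair (constO 2) (.pair (.comp Ccn .right) CG))

def dcode : OCode := .comp plus5 (.pair (constO 1) (.pair P (constO pidn)))

def s (m n : ℕ) : ℕ :=
  Nat.pair 1 (Nat.pair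
    (Nat.pair 2 (Nat.pair (cn n)
      (Nat.pair 1 (Nat.pair m (cn (Nat.pair m (n + 1)))) + 5)) + 5)
    pidn) + 5

lemma eval_CG (O : ℕ →. ℕ) (z : ℕ) :
    evalo O CG z = Part.some (Nat.pair 1 (Nat.pair z.unpair.1 (cn (Nat.pair z.unpair.1 (z.unpair.2 + 1)))) + 5) := by
  simp only [CG, eval_comp, eval_pair, eval_constO, eval_left, eval_right, eval_succ,
    eval_Ccn, eval_plus5, Part.bind_some, bind_some_pfun, Nat.unpair_pair]

lemma eval_P (O : ℕ →. ℕ) (z : ℕ) :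
    evalo O P z = Part.some (Nat.pair 2 (Nat.pair (cn z.unpair.2)
      (Nat.pair 1 (Nat.pair z.unpair.1 (cn (Nat.pair z.unpair.1 (z.unpair.2 + 1)))) + 5)) + 5) := by
  simp only [P, eval_comp, eval_pair, eval_constO, eval_left, eval_right, eval_succ,
    eval_Ccn, eval_CG, eval_plus5, Part.bind_some, bind_some_pfun, Nat.unpair_pair]

lemma eval_dcode (O : ℕ →. ℕ) (z : ℕ) :
    evalo O dcode z = Part.some (s z.unpair.1 z.unpair.2) := by
  simp only [dcode, eval_comp, eval_pair, eval_constO, eval_P, Part.bind_some, bind_some_pfun, eval_plus5, s]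

lemma decode_s (m n : ℕ) :
    ocodeOfNat (s m n)
      = .comp (.prec (constO n) (.comp (ocodeOfNat m) (constO (Nat.pair m (n + 1)))))
          (.pair cid cid) := by
  have h := fun k => (cn_eq k).symm
  simp [s, ocodeOfNat, Nat.unpair_pair, pidn, decode_encode, cn_eq]


def dnum : ℕ := natOfOCode dcode

def g (n : ℕ) : ℕ := s dnum n

lemma g_ne_zero (n : ℕ) : g n ≠ 0 := by simp [g, s]

lemma eval_g (O : ℕ →. ℕ) (n x : ℕ) :
    evalo O (ocodeOfNat (g n)) x = Part.some (if x = 0 then n else g (n + 1)) := by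
  have hd : ocodeOfNat dnum = dcode := decode_encode _
  rw [g, decode_s, hd]
  have key : ∀ k a : ℕ,
      evalo O (.prec (constO n) (.comp dcode (constO (Nat.pair dnum (n + 1))))) (Nat.pair a k)
        = Part.some (if k = 0 then n else g (n + 1)) := by
    intro k a
    induction k with
    | zero => rw [eval_prec_zero, eval_constO]; simp
    | succ m ih =>
        rw [eval_prec_succ, ih, Part.bind_some, eval_comp, eval_constO, bind_some_pfun,
          eval_dcode, Nat.unpair_pair]
        simp [g]
  rw [eval_comp, eval_pair, eval_cid, Part.bind_some, Part.bind_some, bind_some_pfun, key]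


lemma app_i (X : Set ℕ) (a : ℕ) : (K1X X).app (natOfOCode cid) a = Part.some a := by
  show evalo (chi X) (ocodeOfNat (natOfOCode cid)) a = _
  rw [decode_encode]; exact eval_cid _ _

lemma app_g_zero (X : Set ℕ) (n : ℕ) : (K1X X).app (g n) (0 : ℕ) = Part.some n := by
  show evalo (chi X) (ocodeOfNat (g n)) (0 : ℕ) = _
  rw [eval_g]; simp

lemma app_g_pos (X : Set ℕ) (n x : ℕ) (hx : x ≠ 0) :
    (K1X X).app (g n) x = Part.some (g (n + 1)) := by
  show evalo (chi X) (ocodeOfNat (g n)) x = _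
  rw [eval_g]; simp [hx]

lemma selfPow_g (X : Set ℕ) (n : ℕ) :
    selfPow X (g 1) (natOfOCode cid) (n + 1) = Part.some (g (n + 1)) := by
  induction n with
  | zero =>
      show (selfPow X (g 1) (natOfOCode cid) 0).bind _ = _
      rw [show selfPow X (g 1) (natOfOCode cid) 0 = Part.some (natOfOCode cid) from rfl]
      exact (Part.bind_some _ _).trans (app_i X _)
  | succ m ih =>
      show (selfPow X (g 1) (natOfOCode cid) (m + 1)).bind _ = _
      rw [ih]
      exact (Part.bind_some _ _).trans (app_g_pos X _ _ (g_ne_zero 1))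

end Stmt18

/-- In K₁^X there is an index e such that e^n·0 = n for every n
(where e^0 = I is an identity element); consequently any embedding F of K₁^X into
another partial applicative structure is determined on ω by (F(e), F(0)). -/
theorem stmt18 (X : Set ℕ) :
    ∃ e i : ℕ,
      (∀ a : ℕ, (K1X X).app i a = Part.some a) ∧
      (∀ n : ℕ, (selfPow X e i n).bind (fun a => (K1X X).app a (0 : ℕ)) = Part.some n) ∧
      (∀ (B : PAS) (F F' : ℕ → B.carrier),
        PAS.IsEmbedding (K1X X) B F → PAS.IsEmbedding (K1X X) B F' →
        F e = F' e → F 0 = F' 0 → ∀ n : ℕ, F n = F' n) := by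
  refine ⟨Stmt18.g 1, Stmt18.natOfOCode Stmt18.cid, Stmt18.app_i X, ?_, ?_⟩
  · intro n
    cases n with
    | zero =>
        rw [show selfPow X (Stmt18.g 1) (Stmt18.natOfOCode Stmt18.cid) 0
            = Part.some (Stmt18.natOfOCode Stmt18.cid) from rfl, Part.bind_some, Stmt18.app_i]
    | succ m => rw [Stmt18.selfPow_g, Part.bind_some, Stmt18.app_g_zero]
  · intro B F F' hF hF' he h0 n
    have key : ∀ m : ℕ, F (Stmt18.g (m + 1)) = F' (Stmt18.g (m + 1)) := by
      intro m
      induction m with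
      | zero => exact he
      | succ k ih =>
          have h1 := (hF.2 (Stmt18.g (k + 1)) (Stmt18.g 1)).1 (Stmt18.g (k + 2))
            (Stmt18.app_g_pos X _ _ (Stmt18.g_ne_zero 1))
          have h2 := (hF'.2 (Stmt18.g (k + 1)) (Stmt18.g 1)).1 (Stmt18.g (k + 2))
            (Stmt18.app_g_pos X _ _ (Stmt18.g_ne_zero 1))
          rw [ih, he, h2] at h1
          exact (Part.some_inj.mp h1).symm
    cases n with
    | zero => exact h0
    | succ m =>
        have h1 := (hF.2 (Stmt18.g (m + 1)) (0 : ℕ)).1 (m + 1) (Stmt18.app_g_zero X _)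
        have h2 := (hF'.2 (Stmt18.g (m + 1)) (0 : ℕ)).1 (m + 1) (Stmt18.app_g_zero X _)
        rw [key, h0, h2] at h1
        exact (Part.some_inj.mp h1).symm
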